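/- arXiv:1508.00551 — 3 statements merged into one kernel-verified Lean document; each statement's English description precedes it below -/
import Mathlib

section
/- Let p(x) = xⁿ + a_{n-1}x^{n-1} + … + a₀ be a monic polynomial over ℂ with a multiple root x₀ of multiplicity m ≥ 2, and let δp(x) = b_{n-1}x^{n-1} + … + b₀ satisfy δp(x₀) = 0. Then D(a₀,…,a_{n-1}) = 0 and Σ_{i=0}^{n-1} (∂D/∂aᵢ)(a₀,…,a_{n-1})·bᵢ = 0, where D is the discriminant of the generic monic degree-n polynomial as a polynomial in its coefficients. -/
/-! Let `f t = D (a + t • b)`, the discriminant along the pencil `p + t • δp`. Every member of the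
pencil has the root `x₀`; listing it first splits the product of squared root differences into
`(∏ⱼ (x₀ - xⱼ))² = ((p + t • δp)'(x₀))² = t² · δp'(x₀)²`, because `p'(x₀) = 0`, times the
discriminant of the remaining roots, which stay bounded for `‖t‖ ≤ 1`. Hence `f t = O(t²)`, so
`f 0 = D a` and `f' 0 = ∑ᵢ ∂ᵢD(a) · bᵢ` both vanish. -/

open Polynomial Finset Filter Topology Asymptotics

theorem HasDerivAt.eq_zero_of_isBigO_sq {𝕜 E : Type*} [NontriviallyNormedField 𝕜]
    [NormedAddCommGroup E] [NormedSpace 𝕜 E] {f : 𝕜 → E} {f' : E}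
    (hf : HasDerivAt f f' 0) (hO : f =O[𝓝 0] fun t => t ^ 2) : f' = 0 := by
  have h0 : f 0 = 0 := by simpa using hO.eq_zero_imp.self_of_nhds
  refine hf.unique ?_
  rw [hasDerivAt_iff_isLittleO_nhds_zero]
  simpa [h0] using hO.trans_isLittleO (isLittleO_pow_id one_lt_two)

theorem MvPolynomial.hasDerivAt_eval_add_smul {𝕜 σ : Type*} [NontriviallyNormedField 𝕜]
    [Fintype σ] (D : MvPolynomial σ 𝕜) (a b : σ → 𝕜) (t : 𝕜) :
    HasDerivAt (fun s => eval (a + s • b) D) (∑ i, eval (a + t • b) (pderiv i D) * b i) t := by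
  classical
  induction D using MvPolynomial.induction_on with
  | C c => simpa using hasDerivAt_const t c
  | add p q hp hq => simpa [sum_add_distrib, add_mul] using hp.fun_add hq
  | mul_X p i hp =>
    have hX : HasDerivAt (fun s => a i + s * b i) (b i) t := by
      simpa using ((hasDerivAt_id t).mul_const (b i)).const_add (a i)
    have hfun : (fun s => eval (a + s • b) (p * X i)) =
        fun s => eval (a + s • b) p * (a i + s * b i) := by
      ext s; simp
    have hsum : ∑ j, eval (a + t • b) (pderiv j (p * X i)) * b j =
        (∑ j, eval (a + t • b) (pderiv j p) * b j) * (a i + t * b i) +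
          eval (a + t • b) p * b i := by
      simp only [pderiv_mul, pderiv_X, Pi.single_apply, map_add, map_mul, eval_X, Pi.add_apply,
        Pi.smul_apply, smul_eq_mul, apply_ite (eval _), map_zero, mul_ite, ite_mul, mul_one,
        mul_zero, zero_mul, add_mul, sum_add_distrib, sum_ite_eq, mem_univ, if_true]
      rw [sum_mul]
      exact congrArg (· + _) (sum_congr rfl fun _ _ => mul_right_comm _ _ _)
    rw [hfun, hsum]
    exact hp.fun_mul hX

namespace Polynomial

section ofFn

variable {R : Type*} [CommSemiring R] [DecidableEq R] {n : ℕ} (c : Fin n → R)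

theorem eval_ofFn (z : R) : (ofFn n c).eval z = ∑ i, c i * z ^ (i : ℕ) := by
  simp [ofFn_eq_sum_monomial, eval_finsetSum]

theorem sum_C_mul_X_pow_eq_ofFn : ∑ i : Fin n, C (c i) * X ^ (i : ℕ) = ofFn n c := by
  simp [ofFn_eq_sum_monomial, C_mul_X_pow_eq_monomial]

theorem monic_X_pow_add_ofFn : (X ^ n + ofFn n c).Monic :=
  monic_X_pow_add (ofFn_degree_lt c)

theorem natDegree_X_pow_add_ofFn [Nontrivial R] : (X ^ n + ofFn n c).natDegree = n := by
  rw [natDegree_add_eq_left_of_degree_lt] <;> simp [ofFn_degree_lt]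

end ofFn

theorem norm_le_one_add_sum_of_isRoot {K : Type*} [NormedField K] [DecidableEq K] {n : ℕ}
    {c : Fin n → K} {z : K} (hz : (X ^ n + ofFn n c).IsRoot z) : ‖z‖ ≤ 1 + ∑ i, ‖c i‖ := by
  have hS : 0 ≤ ∑ i, ‖c i‖ := sum_nonneg fun _ _ => norm_nonneg _
  rcases le_or_gt ‖z‖ 1 with hz1 | hz1
  · linarith
  have hpow : ‖z‖ ^ n ≤ ∑ i, ‖c i‖ * ‖z‖ ^ (i : ℕ) := by
    have : z ^ n = -∑ i, c i * z ^ (i : ℕ) := by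
      simpa [IsRoot, eval_ofFn, eq_neg_iff_add_eq_zero] using hz
    rw [← norm_pow, this, norm_neg]
    exact (norm_sum_le _ _).trans_eq (by simp [norm_mul, norm_pow])
  have hshift : ‖z‖ * ∑ i, ‖c i‖ * ‖z‖ ^ (i : ℕ) ≤ (∑ i, ‖c i‖) * ‖z‖ ^ n := by
    rw [mul_sum, sum_mul]
    refine sum_le_sum fun i _ => ?_
    calc ‖z‖ * (‖c i‖ * ‖z‖ ^ (i : ℕ)) = ‖c i‖ * ‖z‖ ^ ((i : ℕ) + 1) := by ring
      _ ≤ ‖c i‖ * ‖z‖ ^ n := by gcongr; exacts [hz1.le, i.isLt]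
  have hzn : 0 < ‖z‖ ^ n := by positivity
  nlinarith

theorem eval_derivative_prod_X_sub_C_zero {R : Type*} [CommRing R] {k : ℕ}
    (x : Fin (k + 1) → R) :
    (∏ i, (X - C (x i))).derivative.eval (x 0) = ∏ j : Fin k, (x 0 - x j.succ) := by
  simp [Fin.prod_univ_succ (fun i => X - C (x i)), derivative_mul, eval_prod]

variable {K : Type*} [Field K] [IsAlgClosed K] {p : K[X]}

theorem Monic.exists_eq_prod_X_sub_C {n : ℕ} (hp : p.Monic) (hdeg : p.natDegree = n) :
    ∃ x : Fin n → K, p = ∏ i, (X - C (x i)) := by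
  subst hdeg
  have hsplit : p.Splits := IsAlgClosed.splits p
  set l := p.roots.toList
  have hlen : l.length = p.natDegree := by
    rw [Multiset.length_toList, hsplit.natDegree_eq_card_roots]
  refine ⟨fun i => l[i.cast hlen.symm], ?_⟩
  calc p = (l.map fun a => X - C a).prod := by
        rw [← Multiset.prod_coe, ← Multiset.map_coe, Multiset.coe_toList,
          ← hsplit.eq_prod_roots_of_monic hp]
    _ = _ := by
        rw [← Fin.prod_univ_fun_getElem]
        exact Fintype.prod_equiv (finCongr hlen) _ _ fun i => rfl

theorem Monic.exists_eq_prod_X_sub_C_of_isRoot {k : ℕ} (hp : p.Monic)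
    (hdeg : p.natDegree = k + 1) {z : K} (hz : p.IsRoot z) :
    ∃ x : Fin (k + 1) → K, x 0 = z ∧ p = ∏ i, (X - C (x i)) := by
  obtain ⟨y, rfl⟩ := hp.exists_eq_prod_X_sub_C hdeg
  obtain ⟨i, -, hi⟩ : ∃ i ∈ univ, z - y i = 0 := by
    simpa [IsRoot, eval_prod, prod_eq_zero_iff] using hz
  refine ⟨y ∘ Equiv.swap 0 i, by simp [sub_eq_zero.1 hi], ?_⟩
  exact (Equiv.prod_comp (Equiv.swap 0 i) fun j => X - C (y j)).symm

end Polynomial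

def discrOfRoots {R : Type*} [CommRing R] {n : ℕ} (x : Fin n → R) : R :=
  ∏ i, ∏ j ∈ univ.filter (fun j => i < j), (x i - x j) ^ 2

theorem discrOfRoots_succ {R : Type*} [CommRing R] {k : ℕ} (x : Fin (k + 1) → R) :
    discrOfRoots x = (∏ j : Fin k, (x 0 - x j.succ)) ^ 2 * discrOfRoots (Fin.tail x) := by
  simp [discrOfRoots, prod_filter, Fin.prod_univ_succ, Fin.succ_lt_succ_iff, Fin.succ_pos,
    Fin.tail, prod_pow, mul_pow]

theorem exists_norm_discrOfRoots_le {R : Type*} [NormedCommRing R] [ProperSpace R] (k : ℕ)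
    (r : ℝ) : ∃ M, ∀ y : Fin k → R, (∀ i, ‖y i‖ ≤ r) → ‖discrOfRoots y‖ ≤ M := by
  have hcont : Continuous (discrOfRoots (R := R) (n := k)) := by
    unfold discrOfRoots; fun_prop
  obtain ⟨M, hM⟩ := (isCompact_univ_pi fun _ => isCompact_closedBall (0 : R) r)
    |>.exists_bound_of_continuousOn hcont.continuousOn
  exact ⟨M, fun y hy => hM y (by simpa using hy)⟩

def IsDiscrOfMonic {K : Type*} [CommRing K] [DecidableEq K] {n : ℕ}
    (D : MvPolynomial (Fin n) K) : Prop :=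
  ∀ a x : Fin n → K, X ^ n + ofFn n a = ∏ i, (X - C (x i)) →
    MvPolynomial.eval a D = discrOfRoots x

namespace IsDiscrOfMonic

theorem eval_eq_sq_mul {K : Type*} [Field K] [IsAlgClosed K] [DecidableEq K] {k : ℕ}
    {D : MvPolynomial (Fin (k + 1)) K} (hD : IsDiscrOfMonic D) {c : Fin (k + 1) → K} {z : K}
    (hz : (X ^ (k + 1) + ofFn (k + 1) c).IsRoot z) :
    ∃ y : Fin k → K, (∀ i, (X ^ (k + 1) + ofFn (k + 1) c).IsRoot (y i)) ∧
      MvPolynomial.eval c D =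
        ((X ^ (k + 1) + ofFn (k + 1) c).derivative.eval z) ^ 2 * discrOfRoots y := by
  obtain ⟨x, rfl, hx⟩ := (monic_X_pow_add_ofFn c).exists_eq_prod_X_sub_C_of_isRoot
    (natDegree_X_pow_add_ofFn c) hz
  refine ⟨Fin.tail x, fun i => ?_, ?_⟩
  · rw [hx, IsRoot, eval_prod]
    exact prod_eq_zero (mem_univ i.succ) (by simp [Fin.tail])
  · rw [hD c x hx, discrOfRoots_succ, hx, eval_derivative_prod_X_sub_C_zero]

theorem isBigO_eval_add_smul {n : ℕ} {D : MvPolynomial (Fin n) ℂ} (hD : IsDiscrOfMonic D)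
    {a b : Fin n → ℂ} {x₀ : ℂ} (hmult : 1 < (X ^ n + ofFn n a).rootMultiplicity x₀)
    (hδ : (ofFn n b).IsRoot x₀) :
    (fun t : ℂ => MvPolynomial.eval (a + t • b) D) =O[𝓝 0] fun t => t ^ 2 := by
  obtain ⟨hroot, hroot'⟩ :=
    (one_lt_rootMultiplicity_iff_isRoot (monic_X_pow_add_ofFn a).ne_zero).1 hmult
  rcases n with _ | k
  · simp at hroot
  obtain ⟨M, hM⟩ := exists_norm_discrOfRoots_le (R := ℂ) k (1 + ∑ i, (‖a i‖ + ‖b i‖))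
  have hpencil : ∀ t : ℂ, X ^ (k + 1) + ofFn (k + 1) (a + t • b) =
      X ^ (k + 1) + ofFn (k + 1) a + C t * ofFn (k + 1) b := by
    intro t; rw [map_add, map_smul, smul_eq_C_mul, add_assoc]
  refine IsBigO.of_bound (‖(ofFn (k + 1) b).derivative.eval x₀‖ ^ 2 * M) ?_
  filter_upwards [Metric.closedBall_mem_nhds (0 : ℂ) one_pos] with t ht
  rw [mem_closedBall_zero_iff] at ht
  have hzt : (X ^ (k + 1) + ofFn (k + 1) (a + t • b)).IsRoot x₀ := by
    rw [hpencil, IsRoot.def, eval_add, hroot.eq_zero, eval_mul, hδ.eq_zero, mul_zero, add_zero]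
  obtain ⟨y, hy, heq⟩ := hD.eval_eq_sq_mul hzt
  have hcoeff : ∀ i, ‖(a + t • b) i‖ ≤ ‖a i‖ + ‖b i‖ := fun i =>
    calc ‖a i + t • b i‖ ≤ ‖a i‖ + ‖t • b i‖ := norm_add_le _ _
      _ ≤ ‖a i‖ + ‖b i‖ := by
        gcongr; rw [norm_smul]; exact mul_le_of_le_one_left (norm_nonneg _) ht
  have hbound : ∀ i, ‖y i‖ ≤ 1 + ∑ j, (‖a j‖ + ‖b j‖) := fun i =>
    (norm_le_one_add_sum_of_isRoot (hy i)).trans (by gcongr with j; exact hcoeff j)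
  have hderiv : (X ^ (k + 1) + ofFn (k + 1) (a + t • b)).derivative.eval x₀ =
      t * (ofFn (k + 1) b).derivative.eval x₀ := by
    rw [hpencil, derivative_add, eval_add, hroot'.eq_zero, derivative_C_mul, eval_mul, eval_C,
      zero_add]
  rw [heq, hderiv, norm_mul, norm_pow, norm_mul, norm_pow]
  calc _ ≤ (‖t‖ * ‖(ofFn (k + 1) b).derivative.eval x₀‖) ^ 2 * M := by
        gcongr; exact hM y hbound
    _ = _ := by ring

end IsDiscrOfMonic

/-- Let `D` be the discriminant of the generic monic degree-`n` polynomial as a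
polynomial function of the coefficients.  If the monic polynomial
`p = Xⁿ + ∑ aᵢ Xⁱ` has a multiple root `x₀` of multiplicity `m ≥ 2` and
`δp = ∑ bᵢ Xⁱ` satisfies `δp(x₀) = 0`, then `D(a) = 0` and
`∑ (∂D/∂aᵢ)(a)·bᵢ = 0`. -/
theorem stmt_10 (n : ℕ) (D : MvPolynomial (Fin n) ℂ)
    (hD : ∀ (a x : Fin n → ℂ),
      (X ^ n + ∑ i : Fin n, C (a i) * X ^ (i : ℕ) : Polynomial ℂ) =
          ∏ i, (X - C (x i)) →
        MvPolynomial.eval a D =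
          ∏ i : Fin n, ∏ j ∈ Finset.univ.filter (fun j => i < j), (x i - x j) ^ 2)
    (a b : Fin n → ℂ) (x₀ : ℂ) (m : ℕ) (hm : 2 ≤ m)
    (p : Polynomial ℂ) (hp : p = X ^ n + ∑ i : Fin n, C (a i) * X ^ (i : ℕ))
    (hmult : p.rootMultiplicity x₀ = m)
    (hδ : ∑ i : Fin n, b i * x₀ ^ (i : ℕ) = 0) :
    MvPolynomial.eval a D = 0 ∧
      ∑ i : Fin n, MvPolynomial.eval a (MvPolynomial.pderiv i D) * b i = 0 := by
  simp only [sum_C_mul_X_pow_eq_ofFn] at hp hD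
  subst hp
  have hO := IsDiscrOfMonic.isBigO_eval_add_smul (a := a) (b := b) (x₀ := x₀) hD (by omega)
    (by simpa [IsRoot, eval_ofFn])
  refine ⟨by simpa using hO.eq_zero_imp.self_of_nhds, ?_⟩
  simpa using (MvPolynomial.hasDerivAt_eval_add_smul D a b 0).eq_zero_of_isBigO_sq hO
end

section
/- Any monic polynomial over ℂ with a multiple root x₀ is the limit (in the space of coefficient tuples) of a sequence of monic polynomials of the same degree, each having x₀ as a root of multiplicity exactly 2 and all other roots simple and distinct from x₀. -/
/-!
Write `p = (X - x₀)² · ∏ (X - aₖ)` over the remaining roots `aₖ`. Coefficients of a product of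
linear factors depend continuously on the roots, so it suffices to move the `aₖ` by arbitrarily
little to pairwise distinct points different from `x₀`; one root at a time this is possible
because a finite set has dense complement in `ℂ`.
-/

open Polynomial Filter Topology

theorem exists_seq_tendsto_forall_notMem {X : Type*} [TopologicalSpace X]
    [FirstCountableTopology X] [T1Space X] [∀ x : X, NeBot (𝓝[≠] x)] (a : X) (B : ℕ → Finset X) :
    ∃ c : ℕ → X, Tendsto c atTop (𝓝 a) ∧ ∀ s, c s ∉ B s := by
  obtain ⟨U, hU⟩ := (𝓝 a).exists_antitone_basis
  have hc : ∀ s, ∃ c, c ∈ U s ∧ c ∉ B s := fun s => by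
    obtain ⟨c, ⟨-, hcB⟩, hcU⟩ :=
      (dense_univ.sdiff_finset (B s)).inter_nhds_nonempty (hU.mem s)
    exact ⟨c, hcU, hcB⟩
  choose c hcU hcB using hc
  exact ⟨c, hU.tendsto hcU, hcB⟩

namespace Polynomial

section Semiring

variable {R α : Type*} [CommSemiring R] [TopologicalSpace R]

def TendstoCoeffwise (f : α → R[X]) (l : Filter α) (F : R[X]) : Prop :=
  ∀ i, Tendsto (fun a => (f a).coeff i) l (𝓝 (F.coeff i))

namespace TendstoCoeffwise

variable {l : Filter α}

theorem const (F : R[X]) : TendstoCoeffwise (fun _ => F) l F :=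
  fun _ => tendsto_const_nhds

theorem mul [IsTopologicalSemiring R] {f g : α → R[X]} {F G : R[X]} (hf : TendstoCoeffwise f l F)
    (hg : TendstoCoeffwise g l G) : TendstoCoeffwise (fun a => f a * g a) l (F * G) := fun i => by
  simp_rw [coeff_mul]
  exact tendsto_finsetSum _ fun jk _ => (hf jk.1).mul (hg jk.2)

end TendstoCoeffwise

end Semiring

theorem tendstoCoeffwise_X_sub_C {R α : Type*} [CommRing R] [TopologicalSpace R]
    [IsTopologicalRing R] {l : Filter α} {c : α → R} {a : R} (hc : Tendsto c l (𝓝 a)) :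
    TendstoCoeffwise (fun s => X - C (c s)) l (X - C a) := fun i => by
  simp only [coeff_sub, coeff_C]
  refine tendsto_const_nhds.sub ?_
  split_ifs
  exacts [hc, tendsto_const_nhds]

theorem exists_tendstoCoeffwise_prod_X_sub_C {K : Type*} [NontriviallyNormedField K]
    (S : Finset K) (m : Multiset K) :
    ∃ T : ℕ → Finset K, (∀ s, Disjoint S (T s) ∧ (T s).card = Multiset.card m) ∧
      TendstoCoeffwise (fun s => ∏ r ∈ T s, (X - C r)) atTop (m.map (X - C ·)).prod := by
  classical
  induction m using Multiset.induction_on with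
  | empty => exact ⟨fun _ => ∅, fun _ => by simp, by simpa using TendstoCoeffwise.const 1⟩
  | cons a m ih =>
    obtain ⟨T, hT, hlim⟩ := ih
    obtain ⟨c, hca, hcST⟩ := exists_seq_tendsto_forall_notMem a fun s => S ∪ T s
    simp only [Finset.mem_union, not_or] at hcST
    refine ⟨fun s => insert (c s) (T s), fun s => ⟨?_, ?_⟩, ?_⟩
    · exact Finset.disjoint_insert_right.2 ⟨(hcST s).1, (hT s).1⟩
    · rw [Finset.card_insert_of_notMem (hcST s).2, (hT s).2, Multiset.card_cons]
    · have hprod (s : ℕ) :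
          ∏ r ∈ insert (c s) (T s), (X - C r) = (X - C (c s)) * ∏ r ∈ T s, (X - C r) :=
        Finset.prod_insert (hcST s).2
      simp only [hprod, Multiset.map_cons, Multiset.prod_cons]
      exact (tendstoCoeffwise_X_sub_C hca).mul hlim

end Polynomial

/-- Any monic polynomial over ℂ with a multiple root `x₀` is the coefficientwise
limit of a sequence of monic polynomials of the same degree, each having `x₀` as
a root of multiplicity exactly 2 and all other roots simple and distinct from `x₀`. -/
theorem stmt_11 (n : ℕ) (p : Polynomial ℂ) (hmonic : p.Monic) (hdeg : p.natDegree = n)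
    (x₀ : ℂ) (hroot : 2 ≤ p.rootMultiplicity x₀) :
    ∃ ps : ℕ → Polynomial ℂ,
      (∀ s : ℕ, (ps s).Monic ∧ (ps s).natDegree = n ∧
        (ps s).rootMultiplicity x₀ = 2 ∧
        ∀ z : ℂ, z ≠ x₀ → (ps s).rootMultiplicity z ≤ 1) ∧
      ∀ i : ℕ, Tendsto (fun s => (ps s).coeff i) atTop (nhds (p.coeff i)) := by
  classical
  obtain ⟨m, hroots⟩ : ∃ m, p.roots = Multiset.replicate 2 x₀ + m := by
    rw [← Multiset.le_iff_exists_add, ← Multiset.le_count_iff_replicate_le, count_roots]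
    exact hroot
  have hp : p = ((Multiset.replicate 2 x₀ + m).map (X - C ·)).prod := by
    rw [← hroots]
    exact (IsAlgClosed.splits p).eq_prod_roots_of_monic hmonic
  obtain ⟨T, hT, hlim⟩ := exists_tendstoCoeffwise_prod_X_sub_C {x₀} m
  refine ⟨fun s => ((Multiset.replicate 2 x₀ + (T s).val).map (X - C ·)).prod, fun s => ?_, ?_⟩
  · have hx₀ : x₀ ∉ T s := Finset.disjoint_singleton_left.1 (hT s).1
    refine ⟨monic_multiset_prod_of_monic _ _ fun r _ => monic_X_sub_C r, ?_, ?_, fun z hz => ?_⟩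
    · rw [← hdeg, hp, natDegree_multiset_prod_X_sub_C_eq_card,
        natDegree_multiset_prod_X_sub_C_eq_card]
      simp [(hT s).2]
    · rw [← count_roots, roots_multiset_prod_X_sub_C]
      simp [hx₀]
    · rw [← count_roots, roots_multiset_prod_X_sub_C, Multiset.count_add,
        Multiset.count_replicate, if_neg hz.symm, zero_add]
      exact Multiset.nodup_iff_count_le_one.1 (T s).nodup z
  · rw [hp]
    simp only [Multiset.map_add, Multiset.prod_add]
    exact (TendstoCoeffwise.const _).mul hlim
end

section
/- Let p(x,y) be a polynomial in x of degree n with coefficients differentiable in y ∈ ℂ and leading coefficient aₙ(y), and suppose at (x₀,y₀) with aₙ(y₀) ≠ 0 we have p(x₀,y₀) = 0, ∂p/∂x(x₀,y₀) = 0, and ∂p/∂y(x₀,y₀) = 0. Then the discriminant D(y) of p(·,y) (with respect to x) satisfies D(y₀) = 0 and D'(y₀) = 0. -/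
/-!
Put `c = a(y₀)` and `v = a'`, and consider the pencil `p_t = Σ (cᵢ + t vᵢ) Xⁱ`, whose
discriminant `F(t) = D(c + t v)` has, by the chain rule, the same derivative at `0` as `D(a(y))`
at `y₀`. Every `p_t` vanishes at `x₀`, so `p_t = (X - x₀) q_t` with `q_t = Q + t W`, and
`q_t(x₀) = p_t'(x₀) = t W(x₀)`. Writing the discriminant of `(X - r) q` through the roots of `q`
gives `D((X - r) q) · q(s)² = q(r)² · D((X - s) q)`; choosing `s` with `Q(s) ≠ 0` this yields
`F(t) = t² W(x₀)² D((X - s) q_t) / q_t(s)²` near `t = 0`, a function vanishing to second order.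
-/

open Polynomial Finset Filter Topology

namespace Polynomial

variable {R : Type*}

theorem coeff_sum_fin_C_mul_X_pow [Semiring R] {n : ℕ} (c : Fin (n + 1) → R) (k : Fin (n + 1)) :
    (∑ i : Fin (n + 1), C (c i) * X ^ (i : ℕ)).coeff k = c k := by
  simp only [finsetSum_coeff, coeff_C_mul, coeff_X_pow, mul_ite, mul_one, mul_zero]
  rw [Finset.sum_eq_single k] <;> simp +contextual [Fin.val_eq_val, eq_comm]

theorem natDegree_sum_fin_C_mul_X_pow_le [Semiring R] {n : ℕ} (c : Fin (n + 1) → R) :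
    (∑ i : Fin (n + 1), C (c i) * X ^ (i : ℕ)).natDegree ≤ n :=
  natDegree_le_of_degree_le (Order.le_of_lt_succ (degree_sum_fin_lt c))

theorem sum_fin_C_coeff_mul_X_pow [Semiring R] {n : ℕ} {p : R[X]} (hp : p.natDegree ≤ n) :
    ∑ i : Fin (n + 1), C (p.coeff i) * X ^ (i : ℕ) = p := by
  rw [Fin.sum_univ_eq_sum_range (fun i => C (p.coeff i) * X ^ i),
    ← as_sum_range_C_mul_X_pow' p (Nat.lt_succ_of_le hp)]

theorem eval_derivative_X_sub_C_mul [CommRing R] (r : R) (q : R[X]) :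
    ((X - C r) * q).derivative.eval r = q.eval r := by
  simp

theorem exists_eq_C_leadingCoeff_mul_prod_X_sub_C {k : Type*} [Field k] [IsAlgClosed k]
    {q : k[X]} {m : ℕ} (hq : q.natDegree = m) :
    ∃ y : Fin m → k, q = C q.leadingCoeff * ∏ j, (X - C (y j)) := by
  subst hq
  have hlen : q.roots.toList.length = q.natDegree := by
    simp [IsAlgClosed.card_roots_eq_natDegree]
  refine ⟨fun j => q.roots.toList[j.cast hlen.symm], ?_⟩
  conv_lhs => rw [(IsAlgClosed.splits q).eq_prod_roots, ← Multiset.coe_toList q.roots]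
  rw [Multiset.map_coe, Multiset.prod_coe, ← Fin.prod_univ_fun_getElem]
  exact congrArg _ (Fin.prod_congr' _ hlen.symm).symm

end Polynomial

theorem Fin.prod_prod_Ioi_cons {R M : Type*} [CommMonoid M] {m : ℕ} (f : R → R → M) (r : R)
    (y : Fin m → R) :
    ∏ i, ∏ j ∈ Ioi i, f ((Fin.cons r y : Fin (m + 1) → R) i) ((Fin.cons r y : Fin (m + 1) → R) j) =
      (∏ j, f r (y j)) * ∏ i, ∏ j ∈ Ioi i, f (y i) (y j) := by
  simp [Fin.prod_univ_succ]

section Calculus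

variable {𝕜 : Type*} [NontriviallyNormedField 𝕜]

theorem hasDerivAt_zero_of_eventuallyEq_sq_mul {f k : 𝕜 → 𝕜} {x : 𝕜}
    (hk : DifferentiableAt 𝕜 k x) (hf : f =ᶠ[𝓝 x] fun t => (t - x) ^ 2 * k t) :
    f x = 0 ∧ HasDerivAt f 0 x := by
  refine ⟨by simpa using hf.eq_of_nhds, HasDerivAt.congr_of_eventuallyEq ?_ hf⟩
  simpa using (((hasDerivAt_id x).sub_const x).fun_pow 2).fun_mul hk.hasDerivAt

theorem DifferentiableAt.hasDerivAt_comp_of_hasDerivAt_line {E F : Type*} [NormedAddCommGroup E]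
    [NormedSpace 𝕜 E] [NormedAddCommGroup F] [NormedSpace 𝕜 F] {Φ : E → F} {γ : 𝕜 → E} {v : E}
    {L : F} {y : 𝕜} (hΦ : DifferentiableAt 𝕜 Φ (γ y)) (hγ : HasDerivAt γ v y)
    (hline : HasDerivAt (fun t : 𝕜 => Φ (γ y + t • v)) L 0) :
    HasDerivAt (fun y => Φ (γ y)) L y := by
  have hlineγ : HasDerivAt (fun t : 𝕜 => γ y + t • v) v 0 := by
    simpa using ((hasDerivAt_id (0 : 𝕜)).smul_const v).const_add (γ y)
  have hΦline := hΦ.hasFDerivAt.comp_hasDerivAt_of_eq 0 hlineγ (by simp)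
  rw [hline.unique hΦline]
  exact hΦ.hasFDerivAt.comp_hasDerivAt y hγ

theorem Polynomial.eventually_natDegree_add_C_mul_eq {A B : 𝕜[X]} (hA : A ≠ 0)
    (hB : B.natDegree ≤ A.natDegree) : ∀ᶠ t in 𝓝 0, (A + C t * B).natDegree = A.natDegree := by
  have hcont : Continuous fun t : 𝕜 => A.leadingCoeff + t * B.coeff A.natDegree := by fun_prop
  have h₀ : A.leadingCoeff + 0 * B.coeff A.natDegree ≠ 0 := by simpa using hA
  filter_upwards [hcont.continuousAt.eventually_ne h₀] with t ht
  refine natDegree_eq_of_le_of_coeff_ne_zero ?_ (by simpa using ht)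
  exact natDegree_add_le_of_degree_le le_rfl ((natDegree_C_mul_le _ _).trans hB)

theorem differentiable_eval_coeff_add_C_mul [CompleteSpace 𝕜] {n : ℕ}
    (D : MvPolynomial (Fin n) 𝕜) (A B : 𝕜[X]) :
    Differentiable 𝕜 fun t => MvPolynomial.eval (fun i : Fin n => (A + C t * B).coeff i) D := by
  have hcoeff : Differentiable 𝕜 fun t (i : Fin n) => (A + C t * B).coeff i := by
    simp only [coeff_add, coeff_C_mul]
    fun_prop
  exact fun t => (AnalyticOnNhd.eval_mvPolynomial D _ trivial).differentiableAt.comp t (hcoeff t)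

end Calculus

def IsDiscriminant (n : ℕ) (D : MvPolynomial (Fin (n + 1)) ℂ) : Prop :=
  ∀ (c : Fin (n + 1) → ℂ) (x : Fin n → ℂ),
    (∑ i : Fin (n + 1), C (c i) * X ^ (i : ℕ) : Polynomial ℂ) =
        C (c (Fin.last n)) * ∏ i, (X - C (x i)) →
      MvPolynomial.eval c D =
        c (Fin.last n) ^ (2 * n - 2) *
          ∏ i : Fin n, ∏ j ∈ Finset.univ.filter (fun j => i < j), (x i - x j) ^ 2

namespace IsDiscriminant

section

variable {m : ℕ} {D : MvPolynomial (Fin (m + 2)) ℂ}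

theorem eval_coeff_X_sub_C_mul (hD : IsDiscriminant (m + 1) D) (r lc : ℂ) (y : Fin m → ℂ) :
    MvPolynomial.eval (fun i => ((X - C r) * (C lc * ∏ j, (X - C (y j)))).coeff i) D =
      lc ^ (2 * m) * (∏ j, (r - y j)) ^ 2 * ∏ i, ∏ j ∈ Ioi i, (y i - y j) ^ 2 := by
  set x : Fin (m + 1) → ℂ := Fin.cons r y
  set p := (X - C r) * (C lc * ∏ j, (X - C (y j)))
  have hp : p = C lc * ∏ i, (X - C (x i)) := by
    simp only [p, x, Fin.prod_univ_succ, Fin.cons_zero, Fin.cons_succ]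
    ring
  have hdeg : (∏ i, (X - C (x i))).natDegree = m + 1 := by simp
  have hlc : p.coeff (m + 1) = lc := by
    have h1 := (monic_prod_X_sub_C x univ).coeff_natDegree
    rw [hdeg] at h1
    rw [hp, coeff_C_mul, h1, mul_one]
  have hsum : ∑ i : Fin (m + 2), C (p.coeff i) * X ^ (i : ℕ) = p :=
    sum_fin_C_coeff_mul_X_pow (hp ▸ (natDegree_C_mul_le _ _).trans hdeg.le)
  rw [hD (fun i => p.coeff i) x (by rw [hsum, Fin.val_last, hlc]; exact hp)]
  simp only [Fin.val_last, hlc, filter_lt_eq_Ioi]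
  rw [Fin.prod_prod_Ioi_cons (fun u v => (u - v) ^ 2), ← Finset.prod_pow,
    show 2 * (m + 1) - 2 = 2 * m by omega]
  ring

theorem eval_coeff_X_sub_C_mul_mul_eval_sq (hD : IsDiscriminant (m + 1) D) {q : ℂ[X]}
    (hq : q.natDegree = m) (r s : ℂ) :
    MvPolynomial.eval (fun i => ((X - C r) * q).coeff i) D * q.eval s ^ 2 =
      q.eval r ^ 2 * MvPolynomial.eval (fun i => ((X - C s) * q).coeff i) D := by
  obtain ⟨y, hy⟩ := exists_eq_C_leadingCoeff_mul_prod_X_sub_C hq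
  rw [hy, hD.eval_coeff_X_sub_C_mul, hD.eval_coeff_X_sub_C_mul]
  simp only [eval_mul, eval_C, eval_prod, eval_sub, eval_X]
  ring

theorem eq_zero_and_hasDerivAt_zero_of_X_sub_C_mul (hD : IsDiscriminant (m + 1) D) {Q W : ℂ[X]}
    {x₀ : ℂ} (hQ0 : Q ≠ 0) (hQ : Q.natDegree = m) (hW : W.natDegree ≤ m) (hQx₀ : Q.eval x₀ = 0) :
    let F := fun t : ℂ => MvPolynomial.eval (fun i => ((X - C x₀) * (Q + C t * W)).coeff i) D
    F 0 = 0 ∧ HasDerivAt F 0 0 := by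
  intro F
  set q : ℂ → ℂ[X] := fun t => Q + C t * W
  obtain ⟨s, hs⟩ : ∃ s, Q.eval s ≠ 0 := by
    by_contra! h
    exact hQ0 (Polynomial.funext (by simpa using h))
  have hqs : ∀ t, (q t).eval s = Q.eval s + t * W.eval s := by simp [q]
  have hdeg : ∀ᶠ t in 𝓝 0, (q t).natDegree = m :=
    hQ ▸ eventually_natDegree_add_C_mul_eq hQ0 (hQ ▸ hW)
  have hqs_ne : ∀ᶠ t in 𝓝 0, (q t).eval s ≠ 0 := by
    simp only [hqs]
    exact (by fun_prop : Continuous fun t : ℂ => Q.eval s + t * W.eval s).continuousAt.eventually_ne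
      (by simpa using hs)
  set G := fun t => MvPolynomial.eval (fun i => ((X - C s) * q t).coeff i) D
  have hG : Differentiable ℂ G := by
    have hq : ∀ t, (X - C s) * q t = (X - C s) * Q + C t * ((X - C s) * W) := fun t => by ring
    simpa only [G, hq] using differentiable_eval_coeff_add_C_mul D ((X - C s) * Q) ((X - C s) * W)
  refine hasDerivAt_zero_of_eventuallyEq_sq_mul
    (k := fun t => W.eval x₀ ^ 2 * G t / (q t).eval s ^ 2) ?_ ?_
  · simp only [hqs]
    exact ((hG 0).const_mul _).div (by fun_prop) (by simpa using hs)
  · filter_upwards [hdeg, hqs_ne] with t hdeg_t hs_t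
    have hroot := hD.eval_coeff_X_sub_C_mul_mul_eval_sq hdeg_t x₀ s
    rw [show (q t).eval x₀ = t * W.eval x₀ by simp [q, hQx₀]] at hroot
    field_simp
    linear_combination hroot

end

theorem eq_zero_and_hasDerivAt_zero_of_isRoot {n : ℕ}
    {D : MvPolynomial (Fin (n + 1)) ℂ} (hD : IsDiscriminant n D) {P₀ V : ℂ[X]} {x₀ : ℂ}
    (hlc : P₀.coeff n ≠ 0) (hP₀ : P₀.natDegree ≤ n) (hV : V.natDegree ≤ n) (hP₀x₀ : P₀.IsRoot x₀)
    (hP₀'x₀ : P₀.derivative.eval x₀ = 0) (hVx₀ : V.IsRoot x₀) :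
    let F := fun t : ℂ => MvPolynomial.eval (fun i : Fin (n + 1) => (P₀ + C t * V).coeff i) D
    F 0 = 0 ∧ HasDerivAt F 0 0 := by
  set Q := P₀ /ₘ (X - C x₀)
  set W := V /ₘ (X - C x₀)
  have hQ : (X - C x₀) * Q = P₀ := mul_divByMonic_eq_iff_isRoot.mpr hP₀x₀
  have hW : (X - C x₀) * W = V := mul_divByMonic_eq_iff_isRoot.mpr hVx₀
  have hP₀deg : P₀.natDegree = n := natDegree_eq_of_le_of_coeff_ne_zero hP₀ hlc
  have hQ0 : Q ≠ 0 := by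
    rintro hQ0
    rw [hQ0, mul_zero] at hQ
    exact hlc (by rw [← hQ, coeff_zero])
  obtain ⟨m, rfl⟩ : ∃ m, n = m + 1 := ⟨Q.natDegree, by
    rw [← hP₀deg, ← hQ, natDegree_mul (X_sub_C_ne_zero x₀) hQ0, natDegree_X_sub_C, add_comm]⟩
  have hQdeg : Q.natDegree = m := by
    rw [natDegree_divByMonic _ (monic_X_sub_C x₀), hP₀deg, natDegree_X_sub_C]; rfl
  have hWdeg : W.natDegree ≤ m := by
    rw [natDegree_divByMonic _ (monic_X_sub_C x₀), natDegree_X_sub_C]; omega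
  have hQx₀ : Q.eval x₀ = 0 := by rw [← eval_derivative_X_sub_C_mul, hQ]; exact hP₀'x₀
  have hpencil : ∀ t : ℂ, (X - C x₀) * (Q + C t * W) = P₀ + C t * V := by
    intro t; rw [← hQ, ← hW]; ring
  simpa only [hpencil] using hD.eq_zero_and_hasDerivAt_zero_of_X_sub_C_mul hQ0 hQdeg hWdeg hQx₀

end IsDiscriminant

/-- Let `p(x,y) = ∑ᵢ aᵢ(y) xⁱ` be a degree-`n` polynomial in `x` with coefficients
differentiable in `y`, and let `D` be the discriminant of a general degree-`n`
polynomial as a polynomial function of its coefficients (characterized by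
`lc^(2n-2) ∏_{i<j}(xᵢ-xⱼ)²` on split polynomials), so `Dy y` is the discriminant
of `p(·,y)`.  If at `(x₀,y₀)` with `aₙ(y₀) ≠ 0` we have `p = 0`, `∂p/∂x = 0` and
`∂p/∂y = 0`, then `D(y₀) = 0` and `D'(y₀) = 0`. -/
theorem stmt_13 (n : ℕ) (a : Fin (n + 1) → ℂ → ℂ) (a' : Fin (n + 1) → ℂ)
    (x₀ y₀ : ℂ)
    (hdiff : ∀ i, HasDerivAt (a i) (a' i) y₀)
    (hlc : a (Fin.last n) y₀ ≠ 0)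
    (P : ℂ → Polynomial ℂ)
    (hP : ∀ y, P y = ∑ i : Fin (n + 1), C (a i y) * X ^ (i : ℕ))
    (hp : (P y₀).eval x₀ = 0)
    (hpx : (Polynomial.derivative (P y₀)).eval x₀ = 0)
    (hpy : ∑ i : Fin (n + 1), a' i * x₀ ^ (i : ℕ) = 0)
    (D : MvPolynomial (Fin (n + 1)) ℂ)
    (hD : ∀ (c : Fin (n + 1) → ℂ) (x : Fin n → ℂ),
      (∑ i : Fin (n + 1), C (c i) * X ^ (i : ℕ) : Polynomial ℂ) =
          C (c (Fin.last n)) * ∏ i, (X - C (x i)) →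
        MvPolynomial.eval c D =
          c (Fin.last n) ^ (2 * n - 2) *
            ∏ i : Fin n, ∏ j ∈ Finset.univ.filter (fun j => i < j), (x i - x j) ^ 2)
    (Dy : ℂ → ℂ) (hDy : ∀ y, Dy y = MvPolynomial.eval (fun i => a i y) D) :
    Dy y₀ = 0 ∧ HasDerivAt Dy 0 y₀ := by
  set V : ℂ[X] := ∑ i : Fin (n + 1), C (a' i) * X ^ (i : ℕ)
  have hpencil : ∀ t : ℂ,
      (fun i : Fin (n + 1) => (P y₀ + C t * V).coeff i) = (fun i => a i y₀) + t • a' := by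
    intro t; ext i
    simp only [coeff_add, coeff_C_mul, hP, V, coeff_sum_fin_C_mul_X_pow, Pi.add_apply,
      Pi.smul_apply, smul_eq_mul]
  obtain ⟨hF0, hF'⟩ := IsDiscriminant.eq_zero_and_hasDerivAt_zero_of_isRoot (V := V) hD
    (by rw [hP]; exact (coeff_sum_fin_C_mul_X_pow _ (Fin.last n)).trans_ne hlc)
    (hP y₀ ▸ natDegree_sum_fin_C_mul_X_pow_le _) (natDegree_sum_fin_C_mul_X_pow_le a') hp hpx
    (by simpa [V, eval_finsetSum] using hpy)
  simp only [hpencil] at hF0 hF'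
  have hDy_eq : Dy = fun y => MvPolynomial.eval (fun i => a i y) D := funext hDy
  refine ⟨by simpa [hDy_eq] using hF0, ?_⟩
  rw [hDy_eq]
  exact (AnalyticOnNhd.eval_mvPolynomial D _ trivial).differentiableAt
    |>.hasDerivAt_comp_of_hasDerivAt_line (hasDerivAt_pi.mpr hdiff) hF'
end
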